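/- Let p be a prime and w ∈ V_5. Then #{ ([ℓ₁],[ℓ₂],[ℓ₃]) ∈ P(V_1^*)×P(V_1^*)×P(V_1^*) : (w, ℓ₁²ℓ₂²ℓ₃) = 0 } = (p+1)² + p·#{ ([ℓ₁],[ℓ₂]) ∈ P(V_1^*)×P(V_1^*) : ℓ₁²ℓ₂² is apolar to w }. -/
import Mathlib

open Finset

/-- Multiplication of binary forms encoded by coefficient tuples: a binary form
`∑ i, f i • x^(a-i) * y^i` of degree `a` is encoded as the tuple `f : Fin (a+1) → k`,
and multiplication of forms is convolution of coefficient tuples. -/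
def formMul {k : Type*} [CommRing k] {a b : ℕ} (f : Fin (a + 1) → k)
    (g : Fin (b + 1) → k) : Fin (a + b + 1) → k :=
  fun i => ∑ q : Fin (a + 1) × Fin (b + 1),
    if (q.1 : ℕ) + (q.2 : ℕ) = (i : ℕ) then f q.1 * g q.2 else 0

/-- The pairing `(w, v) = ∑ i, w i * v i` between `V_n` and `V_n^*`. -/
def pair {k : Type*} [CommRing k] {n : ℕ} (w v : Fin (n + 1) → k) : k :=
  ∑ i, w i * v i

lemma formMul_smul_left {k : Type*} [CommRing k] {a b : ℕ} (c : k) (f : Fin (a + 1) → k)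
    (g : Fin (b + 1) → k) : formMul (c • f) g = c • formMul f g := by
  funext i
  simp only [formMul, Pi.smul_apply, smul_eq_mul, Finset.mul_sum]
  exact Finset.sum_congr rfl fun q _ => by split <;> ring

lemma formMul_smul_right {k : Type*} [CommRing k] {a b : ℕ} (c : k) (f : Fin (a + 1) → k)
    (g : Fin (b + 1) → k) : formMul f (c • g) = c • formMul f g := by
  funext i
  simp only [formMul, Pi.smul_apply, smul_eq_mul, Finset.mul_sum]
  exact Finset.sum_congr rfl fun q _ => by split <;> ring

lemma pair_smul {k : Type*} [CommRing k] {n : ℕ} (c : k) (w v : Fin (n + 1) → k) :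
    pair w (c • v) = c * pair w v := by
  simp only [pair, Pi.smul_apply, smul_eq_mul, Finset.mul_sum]
  exact Finset.sum_congr rfl fun q _ => by ring

lemma pair_decomp {k : Type*} [CommRing k] (w : Fin 6 → k) (G : Fin 5 → k) (r : Fin 2 → k) :
    pair w (formMul G r) =
      r 0 * pair w (formMul G ![1, 0]) + r 1 * pair w (formMul G ![0, 1]) := by
  simp [pair, formMul, Fintype.sum_prod_type, Fin.sum_univ_succ]
  ring

section Proj

variable (p : ℕ) [Fact p.Prime]

local notation "K" => ZMod p
local notation "Pj" => Projectivization (ZMod p) (Fin 2 → ZMod p)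

noncomputable def projEquiv : Pj × Kˣ ≃ {v : Fin 2 → K // v ≠ 0} where
  toFun x := ⟨(x.2 : K) • x.1.rep, smul_ne_zero x.2.ne_zero x.1.rep_nonzero⟩
  invFun v := ⟨Projectivization.mk K v.1 v.2,
    (Classical.choose (Projectivization.exists_smul_eq_mk_rep K v.1 v.2))⁻¹⟩
  left_inv := by
    rintro ⟨x, c⟩
    have hne : (c : K) • x.rep ≠ 0 := smul_ne_zero c.ne_zero x.rep_nonzero
    have hmk : Projectivization.mk K ((c : K) • x.rep) hne = x := by
      conv_rhs => rw [← x.mk_rep]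
      exact (Projectivization.mk_eq_mk_iff K _ _ hne x.rep_nonzero).2 ⟨c, rfl⟩
    have hch := Classical.choose_spec
      (Projectivization.exists_smul_eq_mk_rep K ((c : K) • x.rep) hne)
    set a := Classical.choose
      (Projectivization.exists_smul_eq_mk_rep K ((c : K) • x.rep) hne) with ha
    -- a • (c • rep) = (mk (c•rep)).rep = x.rep
    have h1 : ((a * c : Kˣ) : K) • x.rep = x.rep := by
      rw [hmk] at hch
      rw [Units.val_mul, mul_smul]; exact hch
    have h2 : (a * c : Kˣ) = 1 := by
      have h1' : (((a * c : Kˣ) : K) - 1) • x.rep = 0 := by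
        rw [sub_smul, one_smul, h1, sub_self]
      rcases smul_eq_zero.1 h1' with h | h
      · exact Units.ext (by simpa using sub_eq_zero.1 h)
      · exact absurd h x.rep_nonzero
    have : a⁻¹ = c := by
      rw [← mul_one a⁻¹, ← h2, ← mul_assoc, inv_mul_cancel, one_mul]
    simp only [Prod.mk.injEq]
    exact ⟨hmk, this⟩
  right_inv := by
    rintro ⟨v, hv⟩
    have hch := Classical.choose_spec (Projectivization.exists_smul_eq_mk_rep K v hv)
    set a := Classical.choose (Projectivization.exists_smul_eq_mk_rep K v hv)
    apply Subtype.ext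
    show ((a⁻¹ : Kˣ) : K) • (Projectivization.mk K v hv).rep = v
    rw [← hch]
    exact inv_smul_smul a v

lemma cardPj : Nat.card Pj = p + 1 := by
  haveI : NeZero p := ⟨(Fact.out : p.Prime).ne_zero⟩
  have hcongr := Nat.card_congr (projEquiv p)
  rw [Nat.card_prod] at hcongr
  have hu : Nat.card Kˣ = p - 1 := by
    rw [Nat.card_eq_fintype_card, ZMod.card_units]
  have hv : Nat.card {v : Fin 2 → K // v ≠ 0} = p ^ 2 - 1 := by
    rw [Nat.card_eq_fintype_card, Fintype.card_subtype_compl ((· = 0)),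
      Fintype.card_subtype_eq (0 : Fin 2 → K)]
    simp [ZMod.card]
  rw [hu, hv] at hcongr
  have hp2 : 2 ≤ p := (Fact.out : p.Prime).two_le
  have key : (p + 1) * (p - 1) = p ^ 2 - 1 := by
    have h1 : 1 ≤ p := by omega
    have h2 : 1 ≤ p ^ 2 := Nat.one_le_pow _ _ (by omega)
    zify [h1, h2]
    ring
  have := hcongr.trans key.symm
  exact Nat.eq_of_mul_eq_mul_right (by omega) this

lemma fiber_card_pos (w : Fin 6 → K) (G : Fin 5 → K)
    (hall : ∀ h : Fin 2 → K, pair w (formMul G h) = 0) :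
    Nat.card {z : Pj // pair w (formMul G z.rep) = 0} = p + 1 := by
  have e : {z : Pj // pair w (formMul G z.rep) = 0} ≃ Pj :=
    Equiv.subtypeUnivEquiv fun z => hall z.rep
  rw [Nat.card_congr e, cardPj]

lemma fiber_card_neg (w : Fin 6 → K) (G : Fin 5 → K)
    (hnall : ¬ ∀ h : Fin 2 → K, pair w (formMul G h) = 0) :
    Nat.card {z : Pj // pair w (formMul G z.rep) = 0} = 1 := by
  push_neg at hnall
  obtain ⟨h0, hh0⟩ := hnall
  set A := pair w (formMul G ![1, 0]) with hA
  set B := pair w (formMul G ![0, 1]) with hB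
  have hAB : ¬(A = 0 ∧ B = 0) := by
    rintro ⟨ha, hb⟩
    rw [pair_decomp, ← hA, ← hB, ha, hb] at hh0
    simp at hh0
  set kv : Fin 2 → K := ![B, -A] with hkv
  have hk : kv ≠ 0 := by
    intro h
    apply hAB
    constructor
    · have := congrFun h 1
      simp [hkv] at this
      exact this
    · have := congrFun h 0
      simpa [hkv] using this
  rw [Nat.card_eq_one_iff_exists]
  have hmem : pair w (formMul G (Projectivization.mk K kv hk).rep) = 0 := by
    obtain ⟨a, ha⟩ := Projectivization.exists_smul_eq_mk_rep K kv hk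
    rw [← ha, Units.smul_def, formMul_smul_right, pair_smul, pair_decomp]
    simp [hkv]
    ring
  refine ⟨⟨Projectivization.mk K kv hk, hmem⟩, ?_⟩
  rintro ⟨z, hz⟩
  have hz' : z.rep 0 * A + z.rep 1 * B = 0 := by
    rw [pair_decomp] at hz; exact hz
  have hzr := z.rep_nonzero
  have key : ∃ c : K, c • kv = z.rep := by
    by_cases hA0 : A = 0
    · have hB0 : B ≠ 0 := fun h => hAB ⟨hA0, h⟩
      have h1 : z.rep 1 = 0 := by
        rw [hA0] at hz'
        simp at hz'
        rcases hz' with h | h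
        · exact h
        · exact absurd h hB0
      refine ⟨z.rep 0 / B, ?_⟩
      funext i
      fin_cases i <;> simp [hkv, hA0, h1] <;> field_simp
    · refine ⟨-(z.rep 1) / A, ?_⟩
      funext i
      fin_cases i <;> simp [hkv]
      · field_simp
        linear_combination -hz'
      · field_simp
  obtain ⟨c, hc⟩ := key
  have : z = Projectivization.mk K kv hk := by
    rw [← z.mk_rep]
    exact (Projectivization.mk_eq_mk_iff' K _ _ hzr hk).2 ⟨c, hc⟩
  exact Subtype.ext this


lemma predS (w : Fin 6 → K) (x1 x2 x3 : Pj) :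
    (∃ (l1 l2 l3 : Fin 2 → K) (h1 : l1 ≠ 0) (h2 : l2 ≠ 0) (h3 : l3 ≠ 0),
        Projectivization.mk K l1 h1 = x1 ∧
        Projectivization.mk K l2 h2 = x2 ∧
        Projectivization.mk K l3 h3 = x3 ∧
        pair w (formMul (formMul (formMul l1 l1) (formMul l2 l2)) l3) = 0) ↔
      pair w (formMul (formMul (formMul x1.rep x1.rep) (formMul x2.rep x2.rep)) x3.rep)
        = 0 := by
  constructor
  · rintro ⟨l1, l2, l3, h1, h2, h3, e1, e2, e3, hp⟩
    obtain ⟨a1, ha1⟩ : ∃ a : Kˣ, a • x1.rep = l1 :=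
      (Projectivization.mk_eq_mk_iff K l1 x1.rep h1 x1.rep_nonzero).1
        (by rw [e1]; exact x1.mk_rep.symm)
    obtain ⟨a2, ha2⟩ : ∃ a : Kˣ, a • x2.rep = l2 :=
      (Projectivization.mk_eq_mk_iff K l2 x2.rep h2 x2.rep_nonzero).1
        (by rw [e2]; exact x2.mk_rep.symm)
    obtain ⟨a3, ha3⟩ : ∃ a : Kˣ, a • x3.rep = l3 :=
      (Projectivization.mk_eq_mk_iff K l3 x3.rep h3 x3.rep_nonzero).1
        (by rw [e3]; exact x3.mk_rep.symm)
    rw [← ha1, ← ha2, ← ha3] at hp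
    simp only [Units.smul_def, formMul_smul_left, formMul_smul_right, smul_smul,
      pair_smul, mul_eq_zero, Units.ne_zero, false_or] at hp
    exact hp
  · intro h
    exact ⟨x1.rep, x2.rep, x3.rep, x1.rep_nonzero, x2.rep_nonzero, x3.rep_nonzero,
      x1.mk_rep, x2.mk_rep, x3.mk_rep, h⟩

lemma predT (w : Fin 6 → K) (x1 x2 : Pj) :
    (∃ (l1 l2 : Fin 2 → K) (h1 : l1 ≠ 0) (h2 : l2 ≠ 0),
        Projectivization.mk K l1 h1 = x1 ∧
        Projectivization.mk K l2 h2 = x2 ∧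
        ∀ h : Fin 2 → K,
          pair w (formMul (formMul (formMul l1 l1) (formMul l2 l2)) h) = 0) ↔
      ∀ h : Fin 2 → K,
        pair w (formMul (formMul (formMul x1.rep x1.rep) (formMul x2.rep x2.rep)) h)
          = 0 := by
  constructor
  · rintro ⟨l1, l2, h1, h2, e1, e2, hp⟩
    obtain ⟨a1, ha1⟩ : ∃ a : Kˣ, a • x1.rep = l1 :=
      (Projectivization.mk_eq_mk_iff K l1 x1.rep h1 x1.rep_nonzero).1
        (by rw [e1]; exact x1.mk_rep.symm)
    obtain ⟨a2, ha2⟩ : ∃ a : Kˣ, a • x2.rep = l2 :=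
      (Projectivization.mk_eq_mk_iff K l2 x2.rep h2 x2.rep_nonzero).1
        (by rw [e2]; exact x2.mk_rep.symm)
    intro h
    have hp' := hp h
    rw [← ha1, ← ha2] at hp'
    simp only [Units.smul_def, formMul_smul_left, formMul_smul_right, smul_smul,
      pair_smul, mul_eq_zero, Units.ne_zero, false_or] at hp'
    exact hp'
  · intro h
    exact ⟨x1.rep, x2.rep, x1.rep_nonzero, x2.rep_nonzero, x1.mk_rep, x2.mk_rep, h⟩

end Proj

/-- Fiber count for the morphism `ψ_{1²,1²,1}` over `[w^⊥]₅`. -/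
theorem stmt10 (p : ℕ) [Fact p.Prime] (w : Fin 6 → ZMod p) :
    Nat.card {x : Projectivization (ZMod p) (Fin 2 → ZMod p) ×
        Projectivization (ZMod p) (Fin 2 → ZMod p) ×
        Projectivization (ZMod p) (Fin 2 → ZMod p) //
      ∃ (l1 l2 l3 : Fin 2 → ZMod p) (h1 : l1 ≠ 0) (h2 : l2 ≠ 0) (h3 : l3 ≠ 0),
        Projectivization.mk (ZMod p) l1 h1 = x.1 ∧
        Projectivization.mk (ZMod p) l2 h2 = x.2.1 ∧
        Projectivization.mk (ZMod p) l3 h3 = x.2.2 ∧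
        pair w (formMul (formMul (formMul l1 l1) (formMul l2 l2)) l3) = 0} =
    (p + 1) ^ 2 + p * Nat.card {x : Projectivization (ZMod p) (Fin 2 → ZMod p) ×
        Projectivization (ZMod p) (Fin 2 → ZMod p) //
      ∃ (l1 l2 : Fin 2 → ZMod p) (h1 : l1 ≠ 0) (h2 : l2 ≠ 0),
        Projectivization.mk (ZMod p) l1 h1 = x.1 ∧
        Projectivization.mk (ZMod p) l2 h2 = x.2 ∧
        ∀ h : Fin 2 → ZMod p,
          pair w (formMul (formMul (formMul l1 l1) (formMul l2 l2)) h) = 0} := by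
  classical
  haveI : NeZero p := ⟨(Fact.out : p.Prime).ne_zero⟩
  haveI : Finite (Projectivization (ZMod p) (Fin 2 → ZMod p)) := Quotient.finite _
  haveI : Fintype (Projectivization (ZMod p) (Fin 2 → ZMod p)) := Fintype.ofFinite _
  set P := Projectivization (ZMod p) (Fin 2 → ZMod p) with hP
  have e1 : {x : P × P × P //
      ∃ (l1 l2 l3 : Fin 2 → ZMod p) (h1 : l1 ≠ 0) (h2 : l2 ≠ 0) (h3 : l3 ≠ 0),
        Projectivization.mk (ZMod p) l1 h1 = x.1 ∧
        Projectivization.mk (ZMod p) l2 h2 = x.2.1 ∧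
        Projectivization.mk (ZMod p) l3 h3 = x.2.2 ∧
        pair w (formMul (formMul (formMul l1 l1) (formMul l2 l2)) l3) = 0} ≃
      {x : P × P × P //
        pair w (formMul (formMul (formMul x.1.rep x.1.rep)
          (formMul x.2.1.rep x.2.1.rep)) x.2.2.rep) = 0} :=
    Equiv.subtypeEquivRight (fun x => predS p w x.1 x.2.1 x.2.2)
  have e2 : {x : P × P //
      ∃ (l1 l2 : Fin 2 → ZMod p) (h1 : l1 ≠ 0) (h2 : l2 ≠ 0),
        Projectivization.mk (ZMod p) l1 h1 = x.1 ∧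
        Projectivization.mk (ZMod p) l2 h2 = x.2 ∧
        ∀ h : Fin 2 → ZMod p,
          pair w (formMul (formMul (formMul l1 l1) (formMul l2 l2)) h) = 0} ≃
      {x : P × P // ∀ h : Fin 2 → ZMod p,
        pair w (formMul (formMul (formMul x.1.rep x.1.rep)
          (formMul x.2.rep x.2.rep)) h) = 0} :=
    Equiv.subtypeEquivRight (fun x => predT p w x.1 x.2)
  rw [Nat.card_congr e1, Nat.card_congr e2]
  set C : P × P → Prop := fun y => ∀ h : Fin 2 → ZMod p,
    pair w (formMul (formMul (formMul y.1.rep y.1.rep) (formMul y.2.rep y.2.rep)) h) = 0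
    with hC
  have esig : {x : P × P × P //
      pair w (formMul (formMul (formMul x.1.rep x.1.rep)
        (formMul x.2.1.rep x.2.1.rep)) x.2.2.rep) = 0} ≃
      Σ y : P × P, {z : P //
        pair w (formMul (formMul (formMul y.1.rep y.1.rep)
          (formMul y.2.rep y.2.rep)) z.rep) = 0} :=
    { toFun := fun x => ⟨(x.1.1, x.1.2.1), ⟨x.1.2.2, x.2⟩⟩
      invFun := fun s => ⟨(s.1.1, s.1.2, s.2.1), s.2.2⟩
      left_inv := by rintro ⟨⟨a, b, c⟩, h⟩; rfl
      right_inv := by rintro ⟨⟨a, b⟩, ⟨c, h⟩⟩; rfl }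
  rw [Nat.card_congr esig, Nat.card_eq_fintype_card, Fintype.card_sigma]
  have hfib : ∀ y : P × P, Fintype.card {z : P //
      pair w (formMul (formMul (formMul y.1.rep y.1.rep)
        (formMul y.2.rep y.2.rep)) z.rep) = 0} = if C y then p + 1 else 1 := by
    intro y
    rw [← Nat.card_eq_fintype_card]
    by_cases hc : C y
    · rw [if_pos hc]; exact fiber_card_pos p w _ hc
    · rw [if_neg hc]; exact fiber_card_neg p w _ hc
  rw [Finset.sum_congr rfl fun y _ => hfib y]
  have hsplit : ∀ y : P × P, (if C y then p + 1 else 1) = (if C y then p else 0) + 1 := by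
    intro y; split <;> simp
  rw [Finset.sum_congr rfl fun y _ => hsplit y, Finset.sum_add_distrib,
    Finset.sum_const, ← Finset.sum_filter, Finset.sum_const]
  have hcardP2 : (Finset.univ : Finset (P × P)).card = (p + 1) ^ 2 := by
    rw [← Fintype.card, Fintype.card_prod, ← Nat.card_eq_fintype_card, cardPj, sq]
  have hcardC : (Finset.univ.filter C).card = Nat.card {y : P × P // C y} := by
    rw [Nat.card_eq_fintype_card, Fintype.card_subtype]
  rw [hcardP2, hcardC, smul_eq_mul, smul_eq_mul, mul_one]
  ring
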